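/- For all integers L ≥ 0 and all integers a, [2L choose L−a]_q = ∑_{k=0}^{L} q^{(k²−a²)/2} [L choose k]_q · T_0(k,a). -/

import Mathlib

/-!
Both sides expand into the same double sum. Two applications of the `q`-Vandermonde identity
write `[2L, L - a]` (base `q²`) as a sum over `(i, m)` of
`q^{2i(i-a) + 2m(m-a)} [L, i] [i, m] [L - i, m - a]`, and each summand of `T_0(k, a)` is
`q^{r²} [k, r] [k - r, (k + a - r)/2]`. The substitution `k = i + m - a`, `r = i - m` matches the
powers of `q`, and turns both triple products of `q`-binomials into the same `q`-multinomial
coefficient `[L; i - m, m, m - a, L - i - m + a]`.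
-/


open Finset

/-- The variable `q`, realized as the generator of the field of rational functions over `ℚ`. -/
noncomputable def qq : RatFunc ℚ := RatFunc.X

/-- `(x)_n = ∏_{j=1}^n (1 - x^j)`. -/
noncomputable def qPoch (x : RatFunc ℚ) (n : ℕ) : RatFunc ℚ :=
  ∏ j ∈ Finset.range n, (1 - x ^ (j + 1))

/-- Gaussian binomial coefficient `[n choose k]_x`, zero unless `0 ≤ k ≤ n`. -/
noncomputable def qBin (x : RatFunc ℚ) (n k : ℤ) : RatFunc ℚ :=
  if 0 ≤ k ∧ k ≤ n then qPoch x n.toNat / (qPoch x k.toNat * qPoch x (n - k).toNat) else 0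

/-- The `q`-trinomial coefficient `[L, b; a]_2` in base `x`. -/
noncomputable def qTri (x : RatFunc ℚ) (L : ℕ) (b a : ℤ) : RatFunc ℚ :=
  ∑ k ∈ Finset.range (L + 1),
    x ^ ((k : ℤ) * (k + b)) * qBin x (L : ℤ) (k : ℤ) * qBin x ((L : ℤ) - k) ((k : ℤ) + a)

/-- The `q`-trinomial `T_n(L, a)`, written in terms of `s = q^{1/2}` (so the base is `s^2`):
`T_n(L,a) = ∑ s^{r(r-n)} (s²)_L / ((s²)_{(L-a-r)/2} (s²)_{(L+a-r)/2} (s²)_r)`,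
the sum over `r ≥ 0` with `L - a - r` even and `r ≤ L - |a|`; zero for `|a| > L`. -/
noncomputable def qT (s : RatFunc ℚ) (n : ℤ) (L : ℕ) (a : ℤ) : RatFunc ℚ :=
  ∑ r ∈ Finset.range (L + 1),
    if Even ((L : ℤ) - a - r) ∧ (r : ℤ) ≤ (L : ℤ) - |a| then
      s ^ ((r : ℤ) * ((r : ℤ) - n)) * qPoch (s ^ 2) L /
        (qPoch (s ^ 2) (((L : ℤ) - a - r) / 2).toNat *
          qPoch (s ^ 2) (((L : ℤ) + a - r) / 2).toNat * qPoch (s ^ 2) r)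
    else 0

/-- The Cartan matrix of the Lie algebra `A_n`. -/
def cartanA (n : ℕ) (i j : Fin n) : ℤ :=
  if i = j then 2 else if |(i : ℤ) - (j : ℤ)| = 1 then -1 else 0


section QBinomial

variable {x : RatFunc ℚ}

theorem qPoch_zero (x : RatFunc ℚ) : qPoch x 0 = 1 :=
  prod_range_zero _

theorem qPoch_succ (x : RatFunc ℚ) (n : ℕ) : qPoch x (n + 1) = qPoch x n * (1 - x ^ (n + 1)) :=
  prod_range_succ _ _

theorem qPoch_ne_zero (hx : ∀ n : ℕ, x ^ (n + 1) ≠ 1) (n : ℕ) : qPoch x n ≠ 0 :=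
  prod_ne_zero_iff.mpr fun j _ => sub_ne_zero.mpr (hx j).symm

theorem qBin_of_neg {n k : ℤ} (hk : k < 0) : qBin x n k = 0 :=
  if_neg fun h => by omega

theorem qBin_of_lt {n k : ℤ} (h : n < k) : qBin x n k = 0 :=
  if_neg fun h' => by omega

theorem nonneg_and_le_of_qBin_ne_zero {n k : ℤ} (h : qBin x n k ≠ 0) : 0 ≤ k ∧ k ≤ n := by
  by_contra hk
  exact h (if_neg hk)

theorem qBin_natCast {n k : ℕ} (h : k ≤ n) :
    qBin x n k = qPoch x n / (qPoch x k * qPoch x (n - k)) := by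
  rw [qBin, if_pos ⟨k.cast_nonneg, by exact_mod_cast h⟩, Int.toNat_natCast, Int.toNat_natCast,
    ← Nat.cast_sub h, Int.toNat_natCast]

theorem qBin_sub (n : ℕ) (k : ℤ) : qBin x n (n - k) = qBin x n k := by
  by_cases hk : 0 ≤ k ∧ k ≤ n
  · rw [qBin, qBin, if_pos ⟨by omega, by omega⟩, if_pos hk, sub_sub_cancel, mul_comm (qPoch x _)]
  · rw [qBin, qBin, if_neg (by omega), if_neg hk]

variable (hx : ∀ n : ℕ, x ^ (n + 1) ≠ 1)
include hx

theorem qBin_zero_right (n : ℕ) : qBin x n 0 = 1 := by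
  rw [← Nat.cast_zero, qBin_natCast n.zero_le, Nat.sub_zero, qPoch_zero, one_mul,
    div_self (qPoch_ne_zero hx n)]

theorem qBin_self (n : ℕ) : qBin x n n = 1 := by
  rw [← qBin_sub, sub_self, qBin_zero_right hx]

theorem qBin_zero_left (k : ℤ) : qBin x 0 k = if k = 0 then 1 else 0 := by
  split_ifs with hk
  · rw [hk]
    exact qBin_zero_right hx 0
  · rcases lt_or_gt_of_ne hk with hk | hk
    exacts [qBin_of_neg hk, qBin_of_lt hk]

theorem qBin_succ_add_succ (k e : ℕ) :
    qBin x ((k + 1 + e : ℕ) + 1) (k + 1 : ℕ) =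
      qBin x (k + 1 + e : ℕ) k + x ^ (k + 1) * qBin x (k + 1 + e : ℕ) (k + 1 : ℕ) := by
  rw [← Nat.cast_succ, qBin_natCast (by omega), qBin_natCast (by omega), qBin_natCast (by omega),
    show k + 1 + e + 1 - (k + 1) = e + 1 by omega, show k + 1 + e - k = e + 1 by omega,
    show k + 1 + e - (k + 1) = e by omega, qPoch_succ x (k + 1 + e), qPoch_succ x k, qPoch_succ x e]
  field_simp [qPoch_ne_zero hx, sub_ne_zero.mpr (hx _).symm]
  ring

theorem qBin_succ (n : ℕ) (k : ℤ) :
    qBin x (n + 1) k = qBin x n (k - 1) + x ^ k * qBin x n k := by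
  rcases lt_trichotomy k 0 with hk | rfl | hk
  · rw [qBin_of_neg hk, qBin_of_neg hk, qBin_of_neg (by omega), mul_zero, add_zero]
  · rw [qBin_of_neg (by omega : (0 : ℤ) - 1 < 0), zpow_zero, one_mul, zero_add,
      ← Nat.cast_succ, qBin_zero_right hx, qBin_zero_right hx]
  obtain ⟨k, rfl⟩ : ∃ k' : ℕ, k = k' + 1 := ⟨k.toNat - 1, by omega⟩
  rcases lt_trichotomy k n with hkn | rfl | hkn
  · obtain ⟨e, rfl⟩ : ∃ e, n = k + 1 + e := ⟨n - (k + 1), by omega⟩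
    rw [add_sub_cancel_right, ← Nat.cast_succ k, zpow_natCast]
    exact qBin_succ_add_succ hx k e
  · rw [qBin_of_lt (by omega : (k : ℤ) < k + 1), add_sub_cancel_right, mul_zero, add_zero,
      ← Nat.cast_succ, qBin_self hx, qBin_self hx]
  · rw [qBin_of_lt (by omega), qBin_of_lt (by omega), qBin_of_lt (by omega), mul_zero, add_zero]

theorem qBin_succ' (n : ℕ) (k : ℤ) :
    qBin x (n + 1) k = qBin x n k + x ^ (n + 1 - k) * qBin x n (k - 1) := by
  rw [← Nat.cast_succ, ← qBin_sub, Nat.cast_succ, qBin_succ hx, ← qBin_sub n (n + 1 - k - 1),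
    ← qBin_sub n (n + 1 - k)]
  congr 3 <;> ring

theorem qBin_vandermonde_zero (j : ℕ) (a : ℤ) :
    ∑ i ∈ range (j + 1), x ^ ((i : ℤ) * (i + a)) * qBin x j i * qBin x 0 (a + i) =
      qBin x j (a + j) := by
  rw [sum_eq_single (-a).toNat]
  · rcases le_or_gt a 0 with ha | ha
    · rw [show a + ((-a).toNat : ℤ) = 0 by omega, show ((-a).toNat : ℤ) + a = 0 by omega,
        qBin_zero_left hx, if_pos rfl, mul_zero, zpow_zero, one_mul, mul_one, ← qBin_sub]
      congr 1
      omega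
    · rw [qBin_of_lt (by omega : (j : ℤ) < a + j), qBin_of_lt (n := 0) (by omega), mul_zero]
  · intro i _ hi
    rw [qBin_zero_left hx, if_neg (by omega), mul_zero]
  · intro hi
    rw [qBin_of_lt (by simp at hi; omega : (j : ℤ) < _), mul_zero, zero_mul]

theorem qBin_vandermonde (hx0 : x ≠ 0) (j M : ℕ) (a : ℤ) :
    ∑ i ∈ range (j + 1), x ^ ((i : ℤ) * (i + a)) * qBin x j i * qBin x M (a + i) =
      qBin x (j + M : ℕ) (a + j) := by
  induction M generalizing a with
  | zero => exact qBin_vandermonde_zero hx j a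
  | succ M ih =>
    have split (i : ℕ) :
        x ^ ((i : ℤ) * (i + a)) * qBin x j i * qBin x (M + 1 : ℕ) (a + i) =
          x ^ ((i : ℤ) * (i + a)) * qBin x j i * qBin x M (a + i) +
            x ^ ((M : ℤ) + 1 - a) * (x ^ ((i : ℤ) * (i + (a - 1))) * qBin x j i *
              qBin x M (a - 1 + i)) := by
      have hexp : x ^ ((i : ℤ) * (i + a)) * x ^ ((M : ℤ) + 1 - (a + i)) =
          x ^ ((M : ℤ) + 1 - a) * x ^ ((i : ℤ) * (i + (a - 1))) := by
        rw [← zpow_add₀ hx0, ← zpow_add₀ hx0]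
        ring_nf
      rw [Nat.cast_succ, qBin_succ' hx, show a + i - 1 = a - 1 + i by ring]
      linear_combination qBin x j i * qBin x M (a - 1 + i) * hexp
    simp_rw [split, sum_add_distrib, ← mul_sum, ih, ← add_assoc, Nat.cast_succ, qBin_succ' hx]
    push_cast
    ring_nf

theorem qPoch_div_eq_qBin_mul_qBin (r m₁ m₂ : ℕ) :
    qPoch x (r + m₁ + m₂) / (qPoch x m₁ * qPoch x m₂ * qPoch x r) =
      qBin x (r + m₁ + m₂ : ℕ) r * qBin x (m₁ + m₂ : ℕ) m₂ := by
  rw [qBin_natCast (by omega), qBin_natCast (by omega), show r + m₁ + m₂ - r = m₁ + m₂ by omega,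
    show m₁ + m₂ - m₂ = m₁ by omega]
  field_simp [qPoch_ne_zero hx]

theorem qBin_mul_qBin_mul_qBin (r m c d : ℕ) :
    qBin x (r + m + c + d : ℕ) (r + m : ℕ) * qBin x (r + m : ℕ) m * qBin x (c + d : ℕ) c =
      qBin x (r + m + c + d : ℕ) (r + m + c : ℕ) * qBin x (r + m + c : ℕ) r *
        qBin x (m + c : ℕ) m := by
  rw [qBin_natCast (by omega), qBin_natCast (by omega), qBin_natCast (by omega),
    qBin_natCast (by omega), qBin_natCast (by omega), qBin_natCast (by omega),
    show r + m + c + d - (r + m) = c + d by omega, show r + m - m = r by omega,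
    show c + d - c = d by omega, show r + m + c + d - (r + m + c) = d by omega,
    show r + m + c - r = m + c by omega, show m + c - m = c by omega]
  field_simp [qPoch_ne_zero hx]

end QBinomial

theorem sum_range_succ_natCast_eq_sum_Icc {M : Type*} [AddCommMonoid M] (f : ℤ → M) (n : ℕ) :
    ∑ i ∈ range (n + 1), f i = ∑ i ∈ Icc (0 : ℤ) n, f i := by
  rw [Int.Icc_eq_finset_map, sum_map]
  simp

theorem qq_pow_ne_one {m : ℕ} (hm : m ≠ 0) : qq ^ m ≠ 1 := by
  rw [qq, ← RatFunc.algebraMap_X, ← map_pow, ← map_one (algebraMap (Polynomial ℚ) (RatFunc ℚ)),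
    Ne, (RatFunc.algebraMap_injective ℚ).eq_iff]
  intro h
  simpa [hm] using congrArg Polynomial.natDegree h

theorem qq_sq_pow_succ_ne_one (n : ℕ) : (qq ^ 2) ^ (n + 1) ≠ 1 := by
  rw [← pow_mul]
  exact qq_pow_ne_one (by omega)

theorem qq_sq_ne_zero : qq ^ 2 ≠ 0 :=
  pow_ne_zero 2 RatFunc.X_ne_zero

/- The summands of the two sides as double sums; they correspond under `k = i + m - a`,
`r = i - m`. -/
noncomputable def vandermondeSummand (L : ℕ) (a i m : ℤ) : RatFunc ℚ :=
  (qq ^ 2) ^ (i * (i - a) + m * (m - a)) * qBin (qq ^ 2) L i * qBin (qq ^ 2) i m *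
    qBin (qq ^ 2) (L - i) (m - a)

noncomputable def trinomialSummand (L : ℕ) (a k r : ℤ) : RatFunc ℚ :=
  if Even (k - a - r) ∧ r ≤ k - |a| then
    qq ^ (k ^ 2 - a ^ 2 + r ^ 2) * qBin (qq ^ 2) L k * qBin (qq ^ 2) k r *
      qBin (qq ^ 2) (k - r) ((k + a - r) / 2)
  else 0

theorem qBin_two_mul_eq_sum_vandermondeSummand (L : ℕ) (a : ℤ) :
    qBin (qq ^ 2) (2 * L) (L - a) =
      ∑ p ∈ Icc (0 : ℤ) L ×ˢ Icc (0 : ℤ) L, vandermondeSummand L a p.1 p.2 := by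
  have hV := qBin_vandermonde qq_sq_pow_succ_ne_one qq_sq_ne_zero
  rw [sum_product', ← sum_range_succ_natCast_eq_sum_Icc,
    show (2 : ℤ) * L = (L + L : ℕ) by push_cast; ring, show (L : ℤ) - a = -a + L by ring,
    ← hV L L (-a)]
  refine sum_congr rfl fun i hi => ?_
  have hiL : i ≤ L := Nat.lt_succ_iff.mp (mem_range.mp hi)
  rw [← sum_range_succ_natCast_eq_sum_Icc, ← Nat.add_sub_cancel' hiL, ← hV i (L - i) (-a),
    Nat.add_sub_cancel' hiL, mul_sum]
  refine sum_subset_zero_on_sdiff (range_subset_range.mpr (by omega)) (fun m hm => ?_)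
    (fun m _ => ?_)
  · rw [mem_sdiff, mem_range, mem_range] at hm
    rw [vandermondeSummand, qBin_of_lt (by omega : (i : ℤ) < m), mul_zero, zero_mul]
  · rw [vandermondeSummand, zpow_add₀ qq_sq_ne_zero, Nat.cast_sub hiL, neg_add_eq_sub,
      ← sub_eq_add_neg, ← sub_eq_add_neg]
    ring

theorem qT_summand_eq_qBin_mul_qBin {k r : ℕ} {a : ℤ}
    (h : Even ((k : ℤ) - a - r) ∧ (r : ℤ) ≤ k - |a|) :
    qq ^ ((r : ℤ) * (r - 0)) * qPoch (qq ^ 2) k /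
        (qPoch (qq ^ 2) (((k : ℤ) - a - r) / 2).toNat *
          qPoch (qq ^ 2) (((k : ℤ) + a - r) / 2).toNat * qPoch (qq ^ 2) r) =
      qq ^ ((r : ℤ) ^ 2) * qBin (qq ^ 2) k r * qBin (qq ^ 2) (k - r) ((k + a - r) / 2) := by
  obtain ⟨⟨n, hn⟩, habs⟩ := h
  have := le_abs_self a
  have := neg_abs_le a
  obtain ⟨m₁, m₂, hm₁, hm₂, rfl⟩ : ∃ m₁ m₂ : ℕ, (m₁ : ℤ) = ((k : ℤ) - a - r) / 2 ∧
      (m₂ : ℤ) = ((k : ℤ) + a - r) / 2 ∧ k = r + m₁ + m₂ :=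
    ⟨(((k : ℤ) - a - r) / 2).toNat, (((k : ℤ) + a - r) / 2).toNat, by omega, by omega, by omega⟩
  rw [← hm₁, ← hm₂, Int.toNat_natCast, Int.toNat_natCast, mul_div_assoc,
    qPoch_div_eq_qBin_mul_qBin qq_sq_pow_succ_ne_one, sub_zero, ← sq, mul_assoc,
    show ((r + m₁ + m₂ : ℕ) : ℤ) - r = (m₁ + m₂ : ℕ) by push_cast; ring]

theorem sum_qT_eq_sum_trinomialSummand (L : ℕ) (a : ℤ) :
    ∑ k ∈ range (L + 1), qq ^ ((k : ℤ) ^ 2 - a ^ 2) * qBin (qq ^ 2) L k * qT qq 0 k a =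
      ∑ p ∈ Icc (0 : ℤ) L ×ˢ Icc (0 : ℤ) L, trinomialSummand L a p.1 p.2 := by
  rw [sum_product', ← sum_range_succ_natCast_eq_sum_Icc]
  refine sum_congr rfl fun k hk => ?_
  rw [← sum_range_succ_natCast_eq_sum_Icc, qT, mul_sum]
  refine sum_subset_zero_on_sdiff (range_subset_range.mpr (by simpa using hk)) (fun r hr => ?_)
    (fun r _ => ?_)
  · rw [mem_sdiff, mem_range, mem_range] at hr
    rw [trinomialSummand, if_neg fun h => by have := abs_nonneg a; omega]
  · rw [trinomialSummand]
    split_ifs with h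
    · rw [qT_summand_eq_qBin_mul_qBin h, ← mul_assoc, ← mul_assoc, mul_assoc _ _ (qq ^ _),
        mul_comm _ (qq ^ _), ← mul_assoc, ← zpow_add₀ RatFunc.X_ne_zero]
    · rw [mul_zero]

theorem vandermondeSummand_eq_trinomialSummand {L : ℕ} {a i m : ℤ} (hm : 0 ≤ m) (hmi : m ≤ i)
    (ha : a ≤ m) (hL : i + m - a ≤ L) :
    vandermondeSummand L a i m = trinomialSummand L a (i + m - a) (i - m) := by
  have hcond : Even (i + m - a - a - (i - m)) ∧ i - m ≤ i + m - a - |a| :=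
    ⟨⟨m - a, by ring⟩, by rcases abs_cases a with ⟨h, -⟩ | ⟨h, -⟩ <;> rw [h] <;> omega⟩
  have hexp : (qq ^ 2) ^ (i * (i - a) + m * (m - a)) =
      qq ^ ((i + m - a) ^ 2 - a ^ 2 + (i - m) ^ 2) := by
    rw [← zpow_natCast, ← zpow_mul]
    ring_nf
  rw [trinomialSummand, if_pos hcond, vandermondeSummand, hexp,
    show (i + m - a + a - (i - m)) / 2 = m by omega]
  obtain ⟨r, m', c, d, hr, hm', hc, hd⟩ : ∃ r m' c d : ℕ, (r : ℤ) = i - m ∧ (m' : ℤ) = m ∧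
      (c : ℤ) = m - a ∧ (d : ℤ) = L - (i + m - a) :=
    ⟨(i - m).toNat, m.toNat, (m - a).toNat, (L - (i + m - a)).toNat, by omega, by omega, by omega,
      by omega⟩
  have key := qBin_mul_qBin_mul_qBin qq_sq_pow_succ_ne_one r m' c d
  rw [show ((r + m' + c + d : ℕ) : ℤ) = L by push_cast; omega,
    show ((r + m' : ℕ) : ℤ) = i by push_cast; omega,
    show ((c + d : ℕ) : ℤ) = L - i by push_cast; omega,
    show ((r + m' + c : ℕ) : ℤ) = i + m - a by push_cast; omega,
    show ((m' + c : ℕ) : ℤ) = i + m - a - (i - m) by push_cast; omega, hr, hm', hc] at key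
  linear_combination qq ^ ((i + m - a) ^ 2 - a ^ 2 + (i - m) ^ 2) * key

theorem bounds_of_vandermondeSummand_ne_zero {L : ℕ} {a i m : ℤ}
    (h : vandermondeSummand L a i m ≠ 0) : 0 ≤ m ∧ m ≤ i ∧ a ≤ m ∧ i + m - a ≤ L := by
  simp only [vandermondeSummand, ne_eq, mul_eq_zero, not_or] at h
  have h₁ := nonneg_and_le_of_qBin_ne_zero h.1.1.2
  have h₂ := nonneg_and_le_of_qBin_ne_zero h.1.2
  have h₃ := nonneg_and_le_of_qBin_ne_zero h.2
  omega

theorem bounds_of_trinomialSummand_ne_zero {L : ℕ} {a k r : ℤ}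
    (h : trinomialSummand L a k r ≠ 0) : Even (k - a - r) ∧ r ≤ k - |a| ∧ k ≤ L := by
  rw [trinomialSummand] at h
  split_ifs at h with hc
  · simp only [ne_eq, mul_eq_zero, not_or] at h
    exact ⟨hc.1, hc.2, (nonneg_and_le_of_qBin_ne_zero h.1.1.2).2⟩
  · exact absurd rfl h

theorem sum_vandermondeSummand_eq_sum_trinomialSummand (L : ℕ) (a : ℤ) :
    ∑ p ∈ Icc (0 : ℤ) L ×ˢ Icc (0 : ℤ) L, vandermondeSummand L a p.1 p.2 =
      ∑ p ∈ Icc (0 : ℤ) L ×ˢ Icc (0 : ℤ) L, trinomialSummand L a p.1 p.2 := by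
  classical
  rw [← sum_filter_ne_zero, ← sum_filter_ne_zero (s := Icc (0 : ℤ) L ×ˢ Icc (0 : ℤ) L)]
  refine sum_nbij' (fun p => (p.1 + p.2 - a, p.1 - p.2))
    (fun p => (p.2 + (p.1 + a - p.2) / 2, (p.1 + a - p.2) / 2)) ?_ ?_ ?_ ?_ ?_
  · rintro ⟨i, m⟩ hp
    simp only [mem_filter, mem_product, mem_Icc] at hp ⊢
    obtain ⟨hm, hmi, ha, hL⟩ := bounds_of_vandermondeSummand_ne_zero hp.2
    exact ⟨by omega, vandermondeSummand_eq_trinomialSummand hm hmi ha hL ▸ hp.2⟩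
  · rintro ⟨k, r⟩ hp
    simp only [mem_filter, mem_product, mem_Icc] at hp ⊢
    obtain ⟨⟨n, hn⟩, habs, hkL⟩ := bounds_of_trinomialSummand_ne_zero hp.2
    have := le_abs_self a
    have := neg_abs_le a
    refine ⟨by omega, ?_⟩
    rw [vandermondeSummand_eq_trinomialSummand (by omega) (by omega) (by omega) (by omega)]
    convert hp.2 using 2 <;> omega
  · rintro ⟨i, m⟩ -
    simp only [Prod.mk.injEq]
    omega
  · rintro ⟨k, r⟩ hp
    simp only [mem_filter, mem_product, mem_Icc] at hp
    obtain ⟨⟨n, hn⟩, -, -⟩ := bounds_of_trinomialSummand_ne_zero hp.2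
    simp only [Prod.mk.injEq]
    omega
  · rintro ⟨i, m⟩ hp
    simp only [mem_filter, mem_product, mem_Icc] at hp
    obtain ⟨hm, hmi, ha, hL⟩ := bounds_of_vandermondeSummand_ne_zero hp.2
    exact vandermondeSummand_eq_trinomialSummand hm hmi ha hL

theorem stmt5 (L : ℕ) (a : ℤ) :
    qBin (qq ^ 2) (2 * (L : ℤ)) ((L : ℤ) - a) =
      ∑ k ∈ Finset.range (L + 1),
        qq ^ ((k : ℤ) ^ 2 - a ^ 2) * qBin (qq ^ 2) (L : ℤ) (k : ℤ) * qT qq 0 k a := by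
  rw [qBin_two_mul_eq_sum_vandermondeSummand, sum_vandermondeSummand_eq_sum_trinomialSummand,
    sum_qT_eq_sum_trinomialSummand]
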